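/- Let n ≥ 5, Z_n(x,y,z,a) be the 4-perturbed reciprocal matrix with x,y,z,a > 0, and w its Perron eigenvector. If x ≤ min{1,y,z} then w_1/w_n ≥ x, i.e., the edge (1,n) is in G_{Z_n(x,y,z,a),w}. -/
import Mathlib


/-- The reciprocal matrix `Z_n(x,y,z,a)`: all entries equal to one except
(in 1-based indexing) `(1,n-1) = y`, `(1,n) = x`, `(2,n-1) = a`, `(2,n) = z`
and the reciprocals at the transposed positions. -/
noncomputable def Zmat (n : ℕ) (x y z a : ℝ) : Matrix (Fin n) (Fin n) ℝ :=
  fun i j =>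
    if i.val = 0 ∧ j.val = n - 2 then y
    else if i.val = 0 ∧ j.val = n - 1 then x
    else if i.val = 1 ∧ j.val = n - 2 then a
    else if i.val = 1 ∧ j.val = n - 1 then z
    else if i.val = n - 2 ∧ j.val = 0 then y⁻¹
    else if i.val = n - 1 ∧ j.val = 0 then x⁻¹
    else if i.val = n - 2 ∧ j.val = 1 then a⁻¹
    else if i.val = n - 1 ∧ j.val = 1 then z⁻¹
    else 1


theorem Zmat_row0 {n : ℕ} (hn : 5 ≤ n) (x y z a : ℝ) (h : 0 < n) (j : Fin n) :
    Zmat n x y z a ⟨0, h⟩ j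
      = if j.val = n - 2 then y else if j.val = n - 1 then x else 1 := by
  simp [Zmat, show (0:ℕ) ≠ 1 by omega, show (0:ℕ) ≠ n - 2 by omega,
    show (0:ℕ) ≠ n - 1 by omega]

theorem Zmat_rowN {n : ℕ} (hn : 5 ≤ n) (x y z a : ℝ) (h : n - 1 < n) (j : Fin n) :
    Zmat n x y z a ⟨n - 1, h⟩ j
      = if j.val = 0 then x⁻¹ else if j.val = 1 then z⁻¹ else 1 := by
  simp [Zmat, show (n - 1 : ℕ) ≠ 0 by omega, show (n - 1 : ℕ) ≠ 1 by omega,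
    show (n - 1 : ℕ) ≠ n - 2 by omega]

/-- if `x ≤ min {1, y, z}` then `w_1 / w_n ≥ x`, i.e. edge (1,n)
is in `G_{Z_n(x,y,z,a),w}`. -/
theorem zmat_edge_one_n (n : ℕ) (hn : 5 ≤ n) (x y z a : ℝ)
    (hx : 0 < x) (hy : 0 < y) (hz : 0 < z) (ha : 0 < a)
    (r : ℝ) (w : Fin n → ℝ) (hw : ∀ i, 0 < w i)
    (heig : (Zmat n x y z a).mulVec w = r • w)
    (hx1 : x ≤ 1) (hxy : x ≤ y) (hxz : x ≤ z) :
    x ≤ w ⟨0, by omega⟩ / w ⟨n - 1, by omega⟩ := by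
  have hw0 : 0 < w ⟨0, by omega⟩ := hw _
  have hwn : 0 < w ⟨n - 1, by omega⟩ := hw _
  have E0 := congrFun heig ⟨0, by omega⟩
  have En := congrFun heig ⟨n - 1, by omega⟩
  simp only [Matrix.mulVec, dotProduct, Pi.smul_apply, smul_eq_mul] at E0 En
  have hinv : x * z⁻¹ ≤ 1 := by
    rw [← div_eq_mul_inv]
    exact (div_le_one hz).2 hxz
  have hxxinv : x * x⁻¹ = 1 := mul_inv_cancel₀ hx.ne'
  have hZ0pos : ∀ j : Fin n, 0 < Zmat n x y z a ⟨0, by omega⟩ j := by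
    intro j
    rw [Zmat_row0 hn]
    split_ifs <;> positivity
  have hr : 0 < r := by
    have hsum : 0 < ∑ j, Zmat n x y z a ⟨0, by omega⟩ j * w j :=
      Finset.sum_pos (fun j _ => mul_pos (hZ0pos j) (hw j))
        ⟨⟨0, by omega⟩, Finset.mem_univ _⟩
    rw [E0] at hsum
    nlinarith [hw0]
  have key : ∀ j : Fin n,
      0 ≤ (Zmat n x y z a ⟨0, by omega⟩ j - x * Zmat n x y z a ⟨n - 1, by omega⟩ j) * w j := by
    intro j
    have hwj := (hw j).le
    rw [Zmat_row0 hn, Zmat_rowN hn]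
    split_ifs <;>
      first
        | (exfalso; omega)
        | nlinarith [hwj, hxy, hxz, hx1, hinv, hxxinv, hx.le, hy.le, hz.le]
  have hsum_eq : ∑ j, (Zmat n x y z a ⟨0, by omega⟩ j
        - x * Zmat n x y z a ⟨n - 1, by omega⟩ j) * w j
      = r * w ⟨0, by omega⟩ - x * (r * w ⟨n - 1, by omega⟩) := by
    rw [← E0, ← En, Finset.mul_sum, ← Finset.sum_sub_distrib]
    exact Finset.sum_congr rfl fun j _ => by ring
  have hnonneg : 0 ≤ r * w ⟨0, by omega⟩ - x * (r * w ⟨n - 1, by omega⟩) := by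
    rw [← hsum_eq]
    exact Finset.sum_nonneg fun j _ => key j
  rw [le_div_iff₀ hwn]
  nlinarith [hr, hwn]
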